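/- Let n, m, d be positive integers and let a_1, …, a_m ∈ ℤ^n be vectors with nonnegative entries a_j = (a_{1j}, …, a_{nj}) whose coordinates each sum to d. Consider the configuration of m + n vectors v_1, …, v_{m+n} in ℝ^n given by v_j = a_j for 1 ≤ j ≤ m and v_{m+i} = d·e_i for 1 ≤ i ≤ n (e_i the standard basis). Then a vector w = (w_1, …, w_{m+n}) ∈ ℝ^{m+n} satisfies both (i) w_1·d < ∑_{k=1}^{n} w_{m+k}·a_{k1}, and (ii) for every ℓ ∈ {2, …, m} and every j ∈ {1, …, n} with a_{j1} ≠ 0, (a_{jℓ}·w_1 − a_{j1}·w_ℓ)·d < ∑_{k=1}^{n} w_{m+k}·(a_{jℓ}·a_{k1} − a_{j1}·a_{kℓ}), if and only if the regular subdivision S(w) of the configuration v_1, …, v_{m+n} is a regular triangulation whose maximal elements (with respect to inclusion) are exactly the sets {1} ∪ ({m+1, …, m+n} \ {m+j}) for those j ∈ {1, …, n} with a_{j1} ≠ 0. -/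

import Mathlib

open scoped BigOperators

/-- Membership of a subset `σ` in the regular subdivision `S(w)` of the point
configuration `v : ι → (Fin n → ℝ)` with weight vector `w`. -/
def memSubdiv {ι : Type*} {n : ℕ} (v : ι → Fin n → ℝ) (w : ι → ℝ) (σ : Finset ι) : Prop :=
  ∃ m : Fin n → ℝ,
    (∀ i ∈ σ, ∑ k, m k * v i k = w i) ∧ ∀ j, j ∉ σ → ∑ k, m k * v j k < w j

/-- `σ` is a maximal element of the regular subdivision `S(w)`. -/
def isMaximalCell {ι : Type*} {n : ℕ} (v : ι → Fin n → ℝ) (w : ι → ℝ) (σ : Finset ι) : Prop :=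
  memSubdiv v w σ ∧ ∀ τ : Finset ι, memSubdiv v w τ → σ ⊆ τ → σ = τ

namespace Stmt16Aux

variable {m n : ℕ}

/-- The point configuration. -/
def V (d : ℝ) (A : Fin m → Fin n → ℝ) : Fin m ⊕ Fin n → Fin n → ℝ :=
  Sum.elim A (fun j i => if i = j then d else 0)

/-- The claimed maximal cell. -/
def sig (z : Fin m) (j : Fin n) : Finset (Fin m ⊕ Fin n) :=
  insert (Sum.inl z) ((Finset.univ.erase j).image Sum.inr)

/-- The unique supporting linear functional for `sig z j`. -/
noncomputable def mvec (d : ℝ) (A : Fin m → Fin n → ℝ) (w : Fin m ⊕ Fin n → ℝ)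
    (z : Fin m) (j : Fin n) : Fin n → ℝ :=
  fun k => if k = j then
      (w (Sum.inl z) * d - ∑ i ∈ Finset.univ.erase j, w (Sum.inr i) * A z i) / (d * A z j)
    else w (Sum.inr k) / d

/-- Condition (i). -/
def CondI (d : ℝ) (A : Fin m → Fin n → ℝ) (w : Fin m ⊕ Fin n → ℝ) (z : Fin m) : Prop :=
  w (Sum.inl z) * d < ∑ k, w (Sum.inr k) * A z k

/-- Condition (ii). -/
def CondII (d : ℝ) (A : Fin m → Fin n → ℝ) (w : Fin m ⊕ Fin n → ℝ) (z : Fin m) : Prop :=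
  ∀ ℓ : Fin m, ℓ ≠ z → ∀ j : Fin n, A z j ≠ 0 →
    (A ℓ j * w (Sum.inl z) - A z j * w (Sum.inl ℓ)) * d <
      ∑ k, w (Sum.inr k) * (A ℓ j * A z k - A z j * A ℓ k)

lemma mem_sig {z : Fin m} {j : Fin n} {i : Fin m ⊕ Fin n} :
    i ∈ sig z j ↔ i = Sum.inl z ∨ ∃ k, k ≠ j ∧ i = Sum.inr k := by
  simp [sig, eq_comm, and_comm]

lemma sig_eq (z : Fin m) (j : Fin n) :
    sig z j = insert (Sum.inl z)
      ((Finset.univ.image (Sum.inr : Fin n → Fin m ⊕ Fin n)).erase (Sum.inr j)) := by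
  rw [sig, Finset.image_erase Sum.inr_injective]

lemma sum_inr (d : ℝ) (A : Fin m → Fin n → ℝ) (mv : Fin n → ℝ) (k : Fin n) :
    ∑ i, mv i * V d A (Sum.inr k) i = mv k * d := by
  simp [V, mul_ite, mul_zero, Finset.sum_ite_eq']

variable {d : ℝ} {A : Fin m → Fin n → ℝ} {w : Fin m ⊕ Fin n → ℝ} {z : Fin m} {j : Fin n}

lemma mvec_eq_on (hd : 0 < d) (hbj : A z j ≠ 0) :
    ∀ i ∈ sig z j, ∑ k, mvec d A w z j k * V d A i k = w i := by
  intro i hi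
  rcases mem_sig.1 hi with h | ⟨k, hk, h⟩
  · subst h
    show ∑ k, mvec d A w z j k * A z k = w (Sum.inl z)
    rw [← Finset.add_sum_erase _ _ (Finset.mem_univ j)]
    have h1 : ∑ k ∈ Finset.univ.erase j, mvec d A w z j k * A z k
        = (∑ k ∈ Finset.univ.erase j, w (Sum.inr k) * A z k) / d := by
      rw [Finset.sum_div]
      refine Finset.sum_congr rfl fun k hk => ?_
      simp only [mvec, if_neg (Finset.ne_of_mem_erase hk)]; ring
    rw [h1, mvec, if_pos rfl]
    field_simp
    ring
  · subst h
    rw [sum_inr, mvec]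
    simp only [if_neg hk]
    field_simp

lemma mvec_unique (hd : 0 < d) (hbj : A z j ≠ 0) (m' : Fin n → ℝ)
    (h : ∀ i ∈ sig z j, ∑ k, m' k * V d A i k = w i) : m' = mvec d A w z j := by
  have hinr : ∀ k, k ≠ j → m' k = w (Sum.inr k) / d := by
    intro k hk
    have := h (Sum.inr k) (mem_sig.2 (Or.inr ⟨k, hk, rfl⟩))
    rw [sum_inr] at this
    field_simp [this.symm]
    exact this
  funext k
  by_cases hk : k = j
  · subst hk
    have hz' : ∑ i, m' i * A z i = w (Sum.inl z) := h (Sum.inl z) (mem_sig.2 (Or.inl rfl))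
    rw [← Finset.add_sum_erase _ _ (Finset.mem_univ k)] at hz'
    have h1 : ∑ i ∈ Finset.univ.erase k, m' i * A z i
        = (∑ i ∈ Finset.univ.erase k, w (Sum.inr i) * A z i) / d := by
      rw [Finset.sum_div]
      refine Finset.sum_congr rfl fun i hi => ?_
      rw [hinr i (Finset.ne_of_mem_erase hi)]; ring
    rw [h1] at hz'
    rw [mvec, if_pos rfl]
    field_simp at hz' ⊢
    linarith
  · rw [hinr k hk, mvec, if_neg hk]

lemma mvec_strict_inr (hd : 0 < d) (hbj : 0 < A z j) :
    (∑ k, mvec d A w z j k * V d A (Sum.inr j) k < w (Sum.inr j)) ↔ CondI d A w z := by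
  rw [CondI, sum_inr, mvec, if_pos rfl]
  rw [show (∑ k, w (Sum.inr k) * A z k)
      = w (Sum.inr j) * A z j + ∑ k ∈ Finset.univ.erase j, w (Sum.inr k) * A z k from
    (Finset.add_sum_erase _ _ (Finset.mem_univ j)).symm]
  rw [div_mul_eq_mul_div, div_lt_iff₀ (by positivity)]
  constructor <;> intro h <;> nlinarith

lemma mvec_strict_inl (hd : 0 < d) (hbj : 0 < A z j) (ℓ : Fin m) :
    (∑ k, mvec d A w z j k * V d A (Sum.inl ℓ) k < w (Sum.inl ℓ)) ↔
      (A ℓ j * w (Sum.inl z) - A z j * w (Sum.inl ℓ)) * d <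
        ∑ k, w (Sum.inr k) * (A ℓ j * A z k - A z j * A ℓ k) := by
  set S := ∑ i ∈ Finset.univ.erase j, w (Sum.inr i) * A z i with hS
  set R := ∑ i ∈ Finset.univ.erase j, w (Sum.inr i) * A ℓ i with hR
  have hRHS : ∑ k, w (Sum.inr k) * (A ℓ j * A z k - A z j * A ℓ k)
      = A ℓ j * S - A z j * R := by
    rw [← Finset.add_sum_erase _ _ (Finset.mem_univ j)]
    have : ∑ k ∈ Finset.univ.erase j, w (Sum.inr k) * (A ℓ j * A z k - A z j * A ℓ k)
        = ∑ k ∈ Finset.univ.erase j,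
            (A ℓ j * (w (Sum.inr k) * A z k) - A z j * (w (Sum.inr k) * A ℓ k)) :=
      Finset.sum_congr rfl fun k _ => by ring
    rw [this, Finset.sum_sub_distrib, ← Finset.mul_sum, ← Finset.mul_sum, ← hS, ← hR]
    ring
  have hLHS : ∑ k, mvec d A w z j k * V d A (Sum.inl ℓ) k
      = (w (Sum.inl z) * d - S) / (d * A z j) * A ℓ j + R / d := by
    show ∑ k, mvec d A w z j k * A ℓ k = _
    rw [← Finset.add_sum_erase _ _ (Finset.mem_univ j)]
    have h1 : ∑ k ∈ Finset.univ.erase j, mvec d A w z j k * A ℓ k = R / d := by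
      rw [hR, Finset.sum_div]
      refine Finset.sum_congr rfl fun k hk => ?_
      simp only [mvec, if_neg (Finset.ne_of_mem_erase hk)]; ring
    rw [h1, mvec, if_pos rfl]
  rw [hLHS, hRHS]
  rw [← mul_lt_mul_iff_of_pos_right (show (0:ℝ) < d * A z j by positivity)]
  have key : ((w (Sum.inl z) * d - S) / (d * A z j) * A ℓ j + R / d) * (d * A z j)
      = A ℓ j * (w (Sum.inl z)) * d - A ℓ j * S + A z j * R := by
    field_simp
  rw [key]
  constructor <;> intro h <;> nlinarith

/-- Strict inequality off `sig z j`. -/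
lemma mvec_strict (hd : 0 < d) (hA : ∀ ℓ k, 0 ≤ A ℓ k) (hbj : A z j ≠ 0)
    (hI : CondI d A w z) (hII : CondII d A w z) :
    ∀ i, i ∉ sig z j → ∑ k, mvec d A w z j k * V d A i k < w i := by
  have hbj' : 0 < A z j := lt_of_le_of_ne (hA z j) (Ne.symm hbj)
  intro i hi
  match i with
  | Sum.inl ℓ =>
    have hℓ : ℓ ≠ z := fun h => hi (mem_sig.2 (Or.inl (by rw [h])))
    exact (mvec_strict_inl hd hbj' ℓ).2 (hII ℓ hℓ j hbj)
  | Sum.inr k =>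
    have hk : k = j := by
      by_contra hk
      exact hi (mem_sig.2 (Or.inr ⟨k, hk, rfl⟩))
    subst hk
    exact (mvec_strict_inr hd hbj').2 hI

lemma sig_mem (hd : 0 < d) (hA : ∀ ℓ k, 0 ≤ A ℓ k) (hbj : A z j ≠ 0)
    (hI : CondI d A w z) (hII : CondII d A w z) : memSubdiv (V d A) w (sig z j) :=
  ⟨mvec d A w z j, mvec_eq_on hd hbj, mvec_strict hd hA hbj hI hII⟩

lemma sig_maximal (hd : 0 < d) (hA : ∀ ℓ k, 0 ≤ A ℓ k) (hbj : A z j ≠ 0)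
    (hI : CondI d A w z) (hII : CondII d A w z) : isMaximalCell (V d A) w (sig z j) := by
  refine ⟨sig_mem hd hA hbj hI hII, fun τ hτ hsub => ?_⟩
  obtain ⟨m', hm'eq, _⟩ := hτ
  have hm' : m' = mvec d A w z j :=
    mvec_unique hd hbj m' (fun i hi => hm'eq i (hsub hi))
  by_contra hne
  obtain ⟨i, hiτ, hisig⟩ := Finset.exists_of_ssubset (lt_of_le_of_ne hsub hne)
  have h1 := hm'eq i hiτ
  rw [hm'] at h1
  exact absurd h1 (ne_of_lt (mvec_strict hd hA hbj hI hII i hisig))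

lemma claimA (hd : 0 < d) (hI : CondI d A w z) {σ : Finset (Fin m ⊕ Fin n)}
    {mv : Fin n → ℝ} (heq : ∀ i ∈ σ, ∑ k, mv k * V d A i k = w i)
    (hlt : ∀ i, i ∉ σ → ∑ k, mv k * V d A i k < w i) :
    ∃ j, A z j ≠ 0 ∧ Sum.inr j ∉ σ := by
  by_contra h
  push_neg at h
  have h1 : ∀ k, w (Sum.inr k) * A z k = mv k * d * A z k := by
    intro k
    by_cases hb : A z k = 0
    · simp [hb]
    · have := heq (Sum.inr k) (h k hb)
      rw [sum_inr] at this
      rw [this]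
  have h2 : ∑ k, w (Sum.inr k) * A z k = (∑ k, mv k * A z k) * d := by
    rw [Finset.sum_mul]
    exact Finset.sum_congr rfl fun k _ => by rw [h1 k]; ring
  have h3 : ∑ k, mv k * A z k ≤ w (Sum.inl z) := by
    by_cases hz : Sum.inl z ∈ σ
    · exact le_of_eq (heq (Sum.inl z) hz)
    · exact le_of_lt (hlt (Sum.inl z) hz)
  rw [CondI, h2] at hI
  nlinarith

lemma claimB (hd : 0 < d) (hA : ∀ ℓ k, 0 ≤ A ℓ k)
    (hI : CondI d A w z) (hII : CondII d A w z) {σ : Finset (Fin m ⊕ Fin n)}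
    {mv : Fin n → ℝ} (heq : ∀ i ∈ σ, ∑ k, mv k * V d A i k = w i)
    (hlt : ∀ i, i ∉ σ → ∑ k, mv k * V d A i k < w i)
    {ℓ : Fin m} (hℓ : ℓ ≠ z) (hin : Sum.inl ℓ ∈ σ) : False := by
  have hWl : ∑ k, mv k * A ℓ k = w (Sum.inl ℓ) := heq (Sum.inl ℓ) hin
  have ht : ∀ k, mv k * d ≤ w (Sum.inr k) := by
    intro k
    by_cases h : Sum.inr k ∈ σ
    · rw [← sum_inr d A mv k]; exact le_of_eq (heq _ h)
    · have := hlt _ h; rw [sum_inr] at this; exact le_of_lt this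
  have hs : ∑ k, mv k * A z k ≤ w (Sum.inl z) := by
    by_cases hz : Sum.inl z ∈ σ
    · exact le_of_eq (heq (Sum.inl z) hz)
    · exact le_of_lt (hlt (Sum.inl z) hz)
  obtain ⟨j0, hbj0, hj0⟩ := claimA hd hI heq hlt
  have ht0 : mv j0 * d < w (Sum.inr j0) := by
    have := hlt _ hj0; rwa [sum_inr] at this
  set P := ∑ k, w (Sum.inr k) * A z k with hP
  set Q := ∑ k, w (Sum.inr k) * A ℓ k with hQ
  set C := P - w (Sum.inl z) * d with hC
  set T := Q - w (Sum.inl ℓ) * d with hT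
  set s := w (Sum.inl z) - ∑ k, mv k * A z k with hsdef
  have hCpos : 0 < C := by rw [hC]; have := hI; rw [CondI] at this; linarith
  have hspos : 0 ≤ s := by rw [hsdef]; linarith
  have hTsum : ∑ k, (w (Sum.inr k) - mv k * d) * A ℓ k = T := by
    have e1 : ∑ k, (w (Sum.inr k) - mv k * d) * A ℓ k
        = ∑ k, w (Sum.inr k) * A ℓ k - (∑ k, mv k * A ℓ k) * d := by
      rw [Finset.sum_mul, ← Finset.sum_sub_distrib]
      exact Finset.sum_congr rfl fun k _ => by ring
    rw [e1, hWl, ← hQ, hT]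
  have hTpos : 0 ≤ T := by
    rw [← hTsum]
    exact Finset.sum_nonneg fun k _ => mul_nonneg (by linarith [ht k]) (hA ℓ k)
  have hSsum : ∑ k, (w (Sum.inr k) - mv k * d) * A z k = C + s * d := by
    have e1 : ∑ k, (w (Sum.inr k) - mv k * d) * A z k
        = ∑ k, w (Sum.inr k) * A z k - (∑ k, mv k * A z k) * d := by
      rw [Finset.sum_mul, ← Finset.sum_sub_distrib]
      exact Finset.sum_congr rfl fun k _ => by ring
    rw [e1, ← hP, hC, hsdef]; ring
  have hkey : ∀ jj, A z jj ≠ 0 → A z jj * T < A ℓ jj * C := by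
    intro jj hb
    have h2 := hII ℓ hℓ jj hb
    have hsum2 : ∑ k, w (Sum.inr k) * (A ℓ jj * A z k - A z jj * A ℓ k)
        = A ℓ jj * P - A z jj * Q := by
      have : ∑ k, w (Sum.inr k) * (A ℓ jj * A z k - A z jj * A ℓ k)
          = ∑ k, (A ℓ jj * (w (Sum.inr k) * A z k) - A z jj * (w (Sum.inr k) * A ℓ k)) :=
        Finset.sum_congr rfl fun k _ => by ring
      rw [this, Finset.sum_sub_distrib, ← Finset.mul_sum, ← Finset.mul_sum]
    rw [hsum2] at h2
    have e2 : A ℓ jj * C - A z jj * T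
        = (A ℓ jj * P - A z jj * Q)
          - (A ℓ jj * w (Sum.inl z) - A z jj * w (Sum.inl ℓ)) * d := by
      rw [hC, hT]; ring
    linarith
  have hpos : 0 < ∑ jj, (w (Sum.inr jj) - mv jj * d) * (A ℓ jj * C - A z jj * T) := by
    apply Finset.sum_pos'
    · intro jj _
      apply mul_nonneg (by linarith [ht jj])
      by_cases hb : A z jj = 0
      · rw [hb]
        have := mul_nonneg (hA ℓ jj) (le_of_lt hCpos)
        linarith
      · linarith [hkey jj hb]
    · exact ⟨j0, Finset.mem_univ j0, mul_pos (by linarith) (by linarith [hkey j0 hbj0])⟩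
  have hfinal : ∑ jj, (w (Sum.inr jj) - mv jj * d) * (A ℓ jj * C - A z jj * T)
      = C * T - T * (C + s * d) := by
    have e1 : ∑ jj, (w (Sum.inr jj) - mv jj * d) * (A ℓ jj * C - A z jj * T)
        = ∑ jj, (C * ((w (Sum.inr jj) - mv jj * d) * A ℓ jj)
            - T * ((w (Sum.inr jj) - mv jj * d) * A z jj)) :=
      Finset.sum_congr rfl fun jj _ => by ring
    rw [e1, Finset.sum_sub_distrib, ← Finset.mul_sum, ← Finset.mul_sum, hTsum, hSsum]
  rw [hfinal] at hpos
  nlinarith [mul_nonneg (mul_nonneg hTpos hspos) hd.le]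

lemma sig_card (hn : 0 < n) (z : Fin m) (j : Fin n) : (sig z j).card = n := by
  rw [sig, Finset.card_insert_of_notMem (by simp),
    Finset.card_image_of_injective _ Sum.inr_injective,
    Finset.card_erase_of_mem (Finset.mem_univ j), Finset.card_univ, Fintype.card_fin]
  omega

lemma sig_linearIndependent (hd : 0 < d) (hbj : A z j ≠ 0) :
    LinearIndependent ℝ (fun i : (sig z j : Finset (Fin m ⊕ Fin n)) => V d A i) := by
  rw [Fintype.linearIndependent_iff]
  intro g hg
  classical
  set G : Fin m ⊕ Fin n → ℝ := fun i => if h : i ∈ sig z j then g ⟨i, h⟩ else 0 with hG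
  have hsum : ∑ i ∈ sig z j, G i • V d A i = 0 := by
    rw [← Finset.sum_attach (sig z j) (fun i => G i • V d A i)]
    rw [← hg]
    refine Finset.sum_congr rfl fun i _ => ?_
    simp [hG, i.2]
  have hcoord : ∀ p, G (Sum.inl z) * A z p
      + ∑ k ∈ Finset.univ.erase j, G (Sum.inr k) * (if p = k then d else 0) = 0 := by
    intro p
    have h0 := congrFun hsum p
    rw [Finset.sum_apply] at h0
    rw [sig, Finset.sum_insert (by simp),
      Finset.sum_image (fun x _ y _ h => Sum.inr_injective h)] at h0
    simpa [V] using h0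
  have hc0 : G (Sum.inl z) = 0 := by
    have h2 := hcoord j
    have h1 : ∑ k ∈ Finset.univ.erase j, G (Sum.inr k) * (if j = k then d else 0) = 0 := by
      apply Finset.sum_eq_zero
      intro k hk
      rw [if_neg (Ne.symm (Finset.ne_of_mem_erase hk)), mul_zero]
    rw [h1, add_zero] at h2
    exact (mul_eq_zero.1 h2).resolve_right hbj
  have hck : ∀ k, k ≠ j → G (Sum.inr k) = 0 := by
    intro k hk
    have h2 := hcoord k
    have h1 : ∑ k' ∈ Finset.univ.erase j, G (Sum.inr k') * (if k = k' then d else 0)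
        = G (Sum.inr k) * d := by
      rw [Finset.sum_eq_single k]
      · rw [if_pos rfl]
      · intro k' _ hne; rw [if_neg (Ne.symm hne), mul_zero]
      · intro habs; exact absurd (Finset.mem_erase.2 ⟨hk, Finset.mem_univ k⟩) habs
    rw [h1, hc0, zero_mul, zero_add] at h2
    exact (mul_eq_zero.1 h2).resolve_right (ne_of_gt hd)
  intro i
  have hi := i.2
  have hgi : g i = G i.1 := by simp [hG, i.2]
  rw [hgi]
  rcases mem_sig.1 hi with h | ⟨k, hk, h⟩
  · rw [h]; exact hc0
  · rw [h]; exact hck k hk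

end Stmt16Aux

/-- Characterization of perturbations of the generalized Dwork family
`D(z_1, z_{m+1}, …, z_{m+n}; a_1)`: for the configuration consisting of
`a_1, …, a_m` and `d·e_1, …, d·e_n`, a weight vector `w` satisfies the two strict
inequalities (i) and (ii) if and only if `S(w)` is a regular triangulation whose
maximal elements are exactly the sets `{1} ∪ ({m+1, …, m+n} \ {m+j})` for the
indices `j` with `a_{j1} ≠ 0`. -/
theorem stmt16 (n m d : ℕ) (hn : 0 < n) (hm : 0 < m) (hd : 0 < d)
    (a : Fin m → Fin n → ℤ) (ha : ∀ j i, 0 ≤ a j i) (hsum : ∀ j, ∑ i, a j i = (d : ℤ)) :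
    ∀ w : Fin m ⊕ Fin n → ℝ,
      (w (Sum.inl ⟨0, hm⟩) * d < ∑ k : Fin n, w (Sum.inr k) * (a ⟨0, hm⟩ k : ℝ) ∧
        ∀ ℓ : Fin m, ℓ ≠ ⟨0, hm⟩ → ∀ j : Fin n, a ⟨0, hm⟩ j ≠ 0 →
          ((a ℓ j : ℝ) * w (Sum.inl ⟨0, hm⟩) - (a ⟨0, hm⟩ j : ℝ) * w (Sum.inl ℓ)) * d <
            ∑ k : Fin n, w (Sum.inr k) *
              ((a ℓ j : ℝ) * (a ⟨0, hm⟩ k : ℝ) - (a ⟨0, hm⟩ j : ℝ) * (a ℓ k : ℝ)))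
      ↔
      ((∀ σ : Finset (Fin m ⊕ Fin n),
          isMaximalCell
            (Sum.elim (fun (j : Fin m) (i : Fin n) => (a j i : ℝ))
              (fun (j : Fin n) (i : Fin n) => if i = j then (d : ℝ) else 0)) w σ →
          σ.card = n ∧
            LinearIndependent ℝ (fun i : σ =>
              Sum.elim (fun (j : Fin m) (i : Fin n) => (a j i : ℝ))
                (fun (j : Fin n) (i : Fin n) => if i = j then (d : ℝ) else 0) i)) ∧
        ∀ σ : Finset (Fin m ⊕ Fin n),
          isMaximalCell
            (Sum.elim (fun (j : Fin m) (i : Fin n) => (a j i : ℝ))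
              (fun (j : Fin n) (i : Fin n) => if i = j then (d : ℝ) else 0)) w σ ↔
          ∃ j : Fin n, a ⟨0, hm⟩ j ≠ 0 ∧
            σ = insert (Sum.inl ⟨0, hm⟩)
              ((Finset.univ.image (Sum.inr : Fin n → Fin m ⊕ Fin n)).erase (Sum.inr j))) := by
  intro w
  classical
  set z : Fin m := ⟨0, hm⟩ with hz
  set A : Fin m → Fin n → ℝ := fun ℓ k => ((a ℓ k : ℤ) : ℝ) with hA
  have hd' : (0:ℝ) < (d:ℝ) := by exact_mod_cast hd
  have hA0 : ∀ ℓ k, 0 ≤ A ℓ k := fun ℓ k => by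
    simp only [hA]; exact_mod_cast ha ℓ k
  have hAz : ∀ jj : Fin n, A z jj ≠ 0 ↔ a z jj ≠ 0 := fun jj => by
    simp [hA]
  constructor
  · rintro ⟨hI, hII⟩
    have hI' : Stmt16Aux.CondI (d:ℝ) A w z := hI
    have hII' : Stmt16Aux.CondII (d:ℝ) A w z := fun ℓ hℓ j hb => hII ℓ hℓ j ((hAz j).1 hb)
    have part2 : ∀ σ : Finset (Fin m ⊕ Fin n),
        isMaximalCell (Stmt16Aux.V (d:ℝ) A) w σ ↔
        ∃ j : Fin n, a z j ≠ 0 ∧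
          σ = insert (Sum.inl z)
            ((Finset.univ.image (Sum.inr : Fin n → Fin m ⊕ Fin n)).erase (Sum.inr j)) := by
      intro σ
      constructor
      · rintro ⟨⟨mv, heq, hlt⟩, hmax⟩
        obtain ⟨j0, hbj0, hj0⟩ := Stmt16Aux.claimA hd' hI' heq hlt
        have hsub : σ ⊆ Stmt16Aux.sig z j0 := by
          intro i hi
          match i with
          | Sum.inl ℓ =>
            by_cases hℓ : ℓ = z
            · subst hℓ; exact Stmt16Aux.mem_sig.2 (Or.inl rfl)
            · exact absurd hi (fun hin =>
                Stmt16Aux.claimB hd' hA0 hI' hII' heq hlt hℓ hin)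
          | Sum.inr k =>
            have hk : k ≠ j0 := fun h => hj0 (h ▸ hi)
            exact Stmt16Aux.mem_sig.2 (Or.inr ⟨k, hk, rfl⟩)
        have heqsig := hmax (Stmt16Aux.sig z j0)
          (Stmt16Aux.sig_mem hd' hA0 hbj0 hI' hII') hsub
        exact ⟨j0, (hAz j0).1 hbj0, by rw [heqsig, Stmt16Aux.sig_eq]⟩
      · rintro ⟨j, hbj, rfl⟩
        rw [← Stmt16Aux.sig_eq]
        exact Stmt16Aux.sig_maximal hd' hA0 ((hAz j).2 hbj) hI' hII'
    refine ⟨?_, part2⟩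
    intro σ hσ
    obtain ⟨j, hbj, hσeq⟩ := (part2 σ).1 hσ
    rw [← Stmt16Aux.sig_eq] at hσeq
    rw [hσeq]
    exact ⟨Stmt16Aux.sig_card hn z j,
      Stmt16Aux.sig_linearIndependent hd' ((hAz j).2 hbj)⟩
  · rintro ⟨-, hiff⟩
    have hex : ∃ j : Fin n, a z j ≠ 0 := by
      by_contra h
      push_neg at h
      have h0 : ∑ i, a z i = 0 := Finset.sum_eq_zero fun i _ => h i
      have h1 : (d:ℤ) = 0 := by rw [← hsum z]; exact h0
      exact (by exact_mod_cast hd.ne' : (d:ℤ) ≠ 0) h1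
    have getmem : ∀ j : Fin n, a z j ≠ 0 →
        memSubdiv (Stmt16Aux.V (d:ℝ) A) w (Stmt16Aux.sig z j) := by
      intro j hbj
      have := ((hiff _).2 ⟨j, hbj, rfl⟩).1
      rwa [← Stmt16Aux.sig_eq] at this
    constructor
    · obtain ⟨j, hbj⟩ := hex
      have hbj' : A z j ≠ 0 := (hAz j).2 hbj
      have hbjpos : 0 < A z j := lt_of_le_of_ne (hA0 z j) (Ne.symm hbj')
      obtain ⟨m', heq, hlt⟩ := getmem j hbj
      have hm' : m' = Stmt16Aux.mvec (d:ℝ) A w z j := Stmt16Aux.mvec_unique hd' hbj' m' heq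
      have hstrict := hlt (Sum.inr j) (by simp [Stmt16Aux.mem_sig])
      rw [hm'] at hstrict
      exact (Stmt16Aux.mvec_strict_inr hd' hbjpos).1 hstrict
    · intro ℓ hℓ j hbj
      have hbj' : A z j ≠ 0 := (hAz j).2 hbj
      have hbjpos : 0 < A z j := lt_of_le_of_ne (hA0 z j) (Ne.symm hbj')
      obtain ⟨m', heq, hlt⟩ := getmem j hbj
      have hm' : m' = Stmt16Aux.mvec (d:ℝ) A w z j := Stmt16Aux.mvec_unique hd' hbj' m' heq
      have hnotin : Sum.inl ℓ ∉ Stmt16Aux.sig z j := by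
        simp only [Stmt16Aux.mem_sig]
        push_neg
        exact ⟨by simpa using hℓ, fun k _ => by simp⟩
      have hstrict := hlt (Sum.inl ℓ) hnotin
      rw [hm'] at hstrict
      exact (Stmt16Aux.mvec_strict_inl hd' hbjpos ℓ).1 hstrict
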